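/- Let S be a bounded idempotent linear operator on a Hilbert space H (S² = S, an oblique projection), so that R(S) and R(S*) are closed. Then ‖P_{R(S)} − P_{R(S*)}‖ = ‖P_{R(S)} P_{N(S)}‖ = ‖P_{N(S)} P_{R(S)}‖, and this common value equals √(1 − ‖S‖⁻²) when S ≠ 0, and equals 0 when S = 0. -/

import Mathlib

/-!
Write `P = P_{R(S)}`, `Q = P_{N(S)}` and `c = ‖QP‖`. Every `r ∈ R(S)` satisfies
`r = S (r - Qr)`, so `‖r‖ ≤ ‖S‖ ‖r - Qr‖`, which gives `c² ≤ 1 - ‖S‖⁻²`. Conversely, splitting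
`x = Sx + (x - Sx)` with `x - Sx ∈ N(S)` and `|⟪Sx, x - Sx⟫| = |⟪QP Sx, x - Sx⟫| ≤ c ‖Sx‖ ‖x - Sx‖`
gives `(1 - c²) ‖Sx‖² ≤ ‖x‖²`, i.e. `‖S‖² ≤ (1 - c²)⁻¹`.

For the difference of projections, `P_K - P_L = P_{L⊥} P_K - P_L P_{K⊥}` with summands in `L⊥`
and `L`, so `‖P_K - P_L‖ = max ‖P_{L⊥} P_K‖ ‖P_L P_{K⊥}‖`. With `K = R(S)`, `L = R(S*)` we have
`L⊥ = N(S)`, `K⊥ = N(S*)`, and both terms equal `√(1 - ‖S‖⁻²)` because `‖S*‖ = ‖S‖`.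
-/

open Filter Topology Metric Submodule ContinuousLinearMap

/-- Orthogonal projection onto a subspace `K` (as an operator `H →L[ℝ] H`),
defined whenever `K` admits orthogonal projections (e.g. `K` closed). -/
noncomputable def orthProj {H : Type*} [NormedAddCommGroup H] [InnerProductSpace ℝ H]
    (K : Submodule ℝ H) : H →L[ℝ] H :=
  open scoped Classical in
  if h : HasOrthogonalProjection K then
    haveI := h
    K.subtypeL.comp (orthogonalProjection K)
  else 0

lemma orthProj_eq_starProjection {H : Type*} [NormedAddCommGroup H] [InnerProductSpace ℝ H]
    (K : Submodule ℝ H) [h : K.HasOrthogonalProjection] : orthProj K = K.starProjection := by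
  simp only [orthProj, dif_pos h]
  rfl

lemma IsIdempotentElem.one_le_norm {R : Type*} [NonUnitalSeminormedRing R] {p : R}
    (hp : IsIdempotentElem p) (h0 : ‖p‖ ≠ 0) : 1 ≤ ‖p‖ := by
  have := norm_mul_le p p
  rw [hp.eq] at this
  exact (le_mul_iff_one_le_left ((norm_nonneg p).lt_of_ne' h0)).mp this

lemma ContinuousLinearMap.sq_opNorm_le_of_sq_bound {𝕜 E F : Type*} [NontriviallyNormedField 𝕜]
    [SeminormedAddCommGroup E] [SeminormedAddCommGroup F] [NormedSpace 𝕜 E] [NormedSpace 𝕜 F]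
    (T : E →L[𝕜] F) {M : ℝ} (hM : 0 ≤ M) (h : ∀ x, ‖T x‖ ^ 2 ≤ M * ‖x‖ ^ 2) : ‖T‖ ^ 2 ≤ M := by
  have hT : ‖T‖ ≤ √M := T.opNorm_le_bound (Real.sqrt_nonneg M) fun x => by
    rw [← Real.sqrt_sq (norm_nonneg x), ← Real.sqrt_mul hM]
    exact (Real.le_sqrt (norm_nonneg _) (by positivity)).mpr (h x)
  exact (Real.le_sqrt (norm_nonneg T) hM).mp hT

namespace Submodule

section RCLike

variable {𝕜 E : Type*} [RCLike 𝕜] [NormedAddCommGroup E] [InnerProductSpace 𝕜 E]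
  (K L : Submodule 𝕜 E) [K.HasOrthogonalProjection] [L.HasOrthogonalProjection]

lemma norm_starProjection_comp_comm [CompleteSpace E] :
    ‖K.starProjection ∘L L.starProjection‖ = ‖L.starProjection ∘L K.starProjection‖ := by
  rw [← adjoint.norm_map, adjoint_comp, (isSelfAdjoint_starProjection K).adjoint_eq,
    (isSelfAdjoint_starProjection L).adjoint_eq]

lemma starProjection_starProjection (x : E) :
    K.starProjection (K.starProjection x) = K.starProjection x :=
  starProjection_eq_self_iff.mpr (K.starProjection_apply_mem x)

lemma norm_sq_starProjection_sub_starProjection_apply (x : E) :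
    ‖(K.starProjection - L.starProjection) x‖ ^ 2 =
      ‖Lᗮ.starProjection (K.starProjection x)‖ ^ 2 +
        ‖L.starProjection (Kᗮ.starProjection x)‖ ^ 2 := by
  have hL : L.starProjection ((K.starProjection - L.starProjection) x) =
      -L.starProjection (Kᗮ.starProjection x) := by
    simp [starProjection_orthogonal_val, starProjection_starProjection]
  have hLperp : Lᗮ.starProjection ((K.starProjection - L.starProjection) x) =
      Lᗮ.starProjection (K.starProjection x) := by
    simp [starProjection_orthogonal_val, starProjection_starProjection]
  rw [norm_sq_eq_add_norm_sq_starProjection _ L, hL, hLperp, norm_neg, add_comm]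

lemma norm_starProjection_sub_starProjection :
    ‖K.starProjection - L.starProjection‖ =
      max ‖Lᗮ.starProjection ∘L K.starProjection‖ ‖L.starProjection ∘L Kᗮ.starProjection‖ := by
  set a := ‖Lᗮ.starProjection ∘L K.starProjection‖
  set b := ‖L.starProjection ∘L Kᗮ.starProjection‖
  have hpyth := norm_sq_starProjection_sub_starProjection_apply K L
  apply le_antisymm
  · refine (pow_le_pow_iff_left₀ (norm_nonneg _) (by positivity) two_ne_zero).mp <|
      sq_opNorm_le_of_sq_bound _ (by positivity) fun x => ?_
    have ha : ‖Lᗮ.starProjection (K.starProjection x)‖ ≤ a * ‖K.starProjection x‖ := by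
      simpa [starProjection_starProjection] using
        (Lᗮ.starProjection ∘L K.starProjection).le_opNorm (K.starProjection x)
    have hb : ‖L.starProjection (Kᗮ.starProjection x)‖ ≤ b * ‖Kᗮ.starProjection x‖ := by
      simpa [starProjection_starProjection] using
        (L.starProjection ∘L Kᗮ.starProjection).le_opNorm (Kᗮ.starProjection x)
    rw [hpyth, norm_sq_eq_add_norm_sq_starProjection x K, mul_add, ← mul_pow, ← mul_pow]
    gcongr
    · exact ha.trans (by gcongr; exact le_max_left a b)
    · exact hb.trans (by gcongr; exact le_max_right a b)
  · refine max_le (opNorm_le_bound _ (norm_nonneg _) fun x => ?_)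
      (opNorm_le_bound _ (norm_nonneg _) fun x => ?_) <;>
    refine ((pow_le_pow_iff_left₀ (norm_nonneg _) (norm_nonneg _) two_ne_zero).mp ?_).trans
      ((K.starProjection - L.starProjection).le_opNorm x) <;>
    rw [hpyth] <;> simp

end RCLike

lemma one_sub_sq_norm_starProjection_comp_mul_sq_norm_le {H : Type*} [NormedAddCommGroup H]
    [InnerProductSpace ℝ H] (K L : Submodule ℝ H)
    [K.HasOrthogonalProjection] [L.HasOrthogonalProjection] {r n : H} (hr : r ∈ K) (hn : n ∈ L) :
    (1 - ‖L.starProjection ∘L K.starProjection‖ ^ 2) * ‖r‖ ^ 2 ≤ ‖r + n‖ ^ 2 := by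
  set c := ‖L.starProjection ∘L K.starProjection‖
  have hinner : inner ℝ r n = inner ℝ (L.starProjection (K.starProjection r)) n := by
    rw [starProjection_eq_self_iff.mpr hr, inner_starProjection_left_eq_right,
      starProjection_eq_self_iff.mpr hn]
  have habs : |inner ℝ r n| ≤ c * ‖r‖ * ‖n‖ := by
    rw [hinner]
    exact (abs_real_inner_le_norm _ _).trans
      (mul_le_mul_of_nonneg_right ((L.starProjection ∘L K.starProjection).le_opNorm r)
        (norm_nonneg n))
  rw [norm_add_sq_real]
  nlinarith [sq_nonneg (c * ‖r‖ - ‖n‖), neg_abs_le (inner ℝ r n)]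

end Submodule

namespace IsIdempotentElem

variable {H : Type*} [NormedAddCommGroup H] [InnerProductSpace ℝ H] [CompleteSpace H]
  {S : H →L[ℝ] H}

lemma norm_le_opNorm_mul_norm_starProjection_ker_orthogonal (hS : IsIdempotentElem S) {r : H}
    (hr : r ∈ S.range) : ‖r‖ ≤ ‖S‖ * ‖S.kerᗮ.starProjection r‖ := by
  have hSr : S r = r := (LinearMap.IsIdempotentElem.mem_range_iff hS.toLinearMap).mp hr
  have hker : S (S.ker.starProjection r) = 0 := S.ker.starProjection_apply_mem r
  have : S (S.kerᗮ.starProjection r) = r := by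
    rw [starProjection_orthogonal_val, map_sub, hSr, hker, sub_zero]
  calc ‖r‖ = ‖S (S.kerᗮ.starProjection r)‖ := by rw [this]
    _ ≤ ‖S‖ * ‖S.kerᗮ.starProjection r‖ := S.le_opNorm _

variable [S.range.HasOrthogonalProjection]

lemma sq_norm_starProjection_ker_comp_range_le (hS : IsIdempotentElem S) (h0 : S ≠ 0) :
    ‖S.ker.starProjection ∘L S.range.starProjection‖ ^ 2 ≤ 1 - (‖S‖ ^ 2)⁻¹ := by
  have hSpos : 0 < ‖S‖ ^ 2 := by positivity
  have hS1 : (‖S‖ ^ 2)⁻¹ ≤ 1 :=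
    inv_le_one_of_one_le₀ (one_le_pow₀ (hS.one_le_norm (norm_ne_zero_iff.mpr h0)))
  refine sq_opNorm_le_of_sq_bound _ (sub_nonneg.mpr hS1) fun y => ?_
  set r := S.range.starProjection y
  have hr : (‖S‖ ^ 2)⁻¹ * ‖r‖ ^ 2 ≤ ‖S.kerᗮ.starProjection r‖ ^ 2 := by
    rw [inv_mul_le_iff₀ hSpos, ← mul_pow]
    gcongr
    exact hS.norm_le_opNorm_mul_norm_starProjection_ker_orthogonal
      (S.range.starProjection_apply_mem y)
  calc ‖S.ker.starProjection r‖ ^ 2 = ‖r‖ ^ 2 - ‖S.kerᗮ.starProjection r‖ ^ 2 := by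
        rw [norm_sq_eq_add_norm_sq_starProjection r S.ker]; ring
    _ ≤ (1 - (‖S‖ ^ 2)⁻¹) * ‖r‖ ^ 2 := by linarith
    _ ≤ (1 - (‖S‖ ^ 2)⁻¹) * ‖y‖ ^ 2 :=
        mul_le_mul_of_nonneg_left (by gcongr; exact S.range.norm_starProjection_apply_le y)
          (sub_nonneg.mpr hS1)

lemma norm_starProjection_ker_comp_range (hS : IsIdempotentElem S) (h0 : S ≠ 0) :
    ‖S.ker.starProjection ∘L S.range.starProjection‖ = √(1 - (‖S‖ ^ 2)⁻¹) := by
  set c := ‖S.ker.starProjection ∘L S.range.starProjection‖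
  have hSpos : 0 < ‖S‖ ^ 2 := by positivity
  have hupper := hS.sq_norm_starProjection_ker_comp_range_le h0
  have hd : 0 < 1 - c ^ 2 := by have := inv_pos.mpr hSpos; linarith
  have hSx (x : H) : ‖S x‖ ^ 2 ≤ (1 - c ^ 2)⁻¹ * ‖x‖ ^ 2 := by
    have hSS : S (S x) = S x := DFunLike.congr_fun hS.eq x
    have hn : x - S x ∈ S.ker := by rw [LinearMap.mem_ker, coe_coe, map_sub, hSS, sub_self]
    have := S.range.one_sub_sq_norm_starProjection_comp_mul_sq_norm_le S.ker
      (LinearMap.mem_range_self _ x) hn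
    rw [inv_mul_eq_div, le_div_iff₀' hd]
    simpa using this
  have hlower : 1 - c ^ 2 ≤ (‖S‖ ^ 2)⁻¹ :=
    (le_inv_comm₀ hd hSpos).mpr (sq_opNorm_le_of_sq_bound S (by positivity) hSx)
  rw [← le_antisymm hupper (by linarith), Real.sqrt_sq (norm_nonneg _)]

end IsIdempotentElem

/-- For a bounded idempotent `S` on a Hilbert space:
`‖P_{R(S)} − P_{R(S*)}‖ = ‖P_{R(S)}P_{N(S)}‖ = ‖P_{N(S)}P_{R(S)}‖`, and this value is
`√(1 − ‖S‖⁻²)` when `S ≠ 0` and `0` when `S = 0`. -/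
theorem stmt14 {H : Type*} [NormedAddCommGroup H] [InnerProductSpace ℝ H] [CompleteSpace H]
    (S : H →L[ℝ] H) (hS : S.comp S = S) :
    ‖orthProj (LinearMap.range (S : H →ₗ[ℝ] H)) - orthProj (LinearMap.range (ContinuousLinearMap.adjoint S : H →ₗ[ℝ] H))‖
      = ‖(orthProj (LinearMap.range (S : H →ₗ[ℝ] H))).comp (orthProj (LinearMap.ker (S : H →ₗ[ℝ] H)))‖ ∧
    ‖(orthProj (LinearMap.range (S : H →ₗ[ℝ] H))).comp (orthProj (LinearMap.ker (S : H →ₗ[ℝ] H)))‖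
      = ‖(orthProj (LinearMap.ker (S : H →ₗ[ℝ] H))).comp (orthProj (LinearMap.range (S : H →ₗ[ℝ] H)))‖ ∧
    (S ≠ 0 → ‖(orthProj (LinearMap.ker (S : H →ₗ[ℝ] H))).comp (orthProj (LinearMap.range (S : H →ₗ[ℝ] H)))‖
      = Real.sqrt (1 - (‖S‖ ^ 2)⁻¹)) ∧
    (S = 0 → ‖(orthProj (LinearMap.ker (S : H →ₗ[ℝ] H))).comp (orthProj (LinearMap.range (S : H →ₗ[ℝ] H)))‖ = 0) := by
  have hS : IsIdempotentElem S := hS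
  have hS' : IsIdempotentElem (adjoint S) := star_eq_adjoint S ▸ hS.star
  have := hS.hasOrthogonalProjection_range
  have := hS'.hasOrthogonalProjection_range
  simp only [orthProj_eq_starProjection]
  have hcomm := norm_starProjection_comp_comm S.range S.ker
  rcases eq_or_ne S 0 with rfl | h0
  · simp
  have h0' : adjoint S ≠ 0 := by rwa [ne_eq, LinearIsometryEquiv.map_eq_zero_iff]
  have hnorm := hS.norm_starProjection_ker_comp_range h0
  refine ⟨?_, hcomm, fun _ => hnorm, fun h => absurd h h0⟩
  rw [norm_starProjection_sub_starProjection]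
  simp only [orthogonal_range, adjoint_adjoint]
  rw [hcomm, norm_starProjection_comp_comm (adjoint S).range,
    hS'.norm_starProjection_ker_comp_range h0', adjoint.norm_map, hnorm, max_self]
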